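/- Let (Ω, 𝓕, P) be a probability space with a filtration (𝒢_t)_{t=0}^{T}. Let p ∈ (0,1] and F ≥ 0 be a real number with F·p ≤ 1. For each t ∈ {1,…,T}, let f_t be a {0,1}-valued random variable that is 𝒢_{t−1}-measurable, with Σ_{t=1}^{T} f_t ≤ F almost surely, and let B_t be a {0,1}-valued 𝒢_t-measurable random variable that is independent of 𝒢_{t−1} and satisfies P(B_t = 1) = p. Then for every ε ∈ (0,1): P( Σ_{t=1}^{T} f_t·B_t > log(1/ε) + 2 ) ≤ ε. -/

import Mathlib

open MeasureTheory ProbabilityTheory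

lemma integrable_of_bdd' {Ω : Type*} {m : MeasurableSpace Ω} (P : Measure Ω)
    [IsProbabilityMeasure P] {h : Ω → ℝ} (hm : Measurable h) (C : ℝ)
    (hb : ∀ ω, |h ω| ≤ C) : Integrable h P :=
  (integrable_const C).mono' hm.aestronglyMeasurable (ae_of_all _ fun ω => by
    simpa [Real.norm_eq_abs] using hb ω)

/-- Per-level fake-exposure bound ('lem_maxfake'): with `f t` a `{0,1}`-valued
predictable (𝒢_{t−1}-measurable) fakeness indicator of total budget `F`, and `B t` an
independent-of-the-past Bernoulli(p) level indicator with `F·p ≤ 1`, the number of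
fake rounds hitting the level exceeds `log(1/ε) + 2` with probability at most `ε`. -/
theorem per_level_fake_exposure
    {Ω : Type*} {m0 : MeasurableSpace Ω} (P : Measure Ω) [IsProbabilityMeasure P]
    (T : ℕ) (𝒢 : Filtration ℕ m0)
    (p : ℝ) (hp0 : 0 < p) (hp1 : p ≤ 1)
    (F : ℝ) (hF : 0 ≤ F) (hFp : F * p ≤ 1)
    (f B : ℕ → Ω → ℝ)
    (hf01 : ∀ t ∈ Finset.Icc 1 T, ∀ ω, f t ω = 0 ∨ f t ω = 1)
    (hfmeas : ∀ t ∈ Finset.Icc 1 T, Measurable[𝒢 (t - 1)] (f t))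
    (hfbudget : ∀ᵐ ω ∂P, ∑ t ∈ Finset.Icc 1 T, f t ω ≤ F)
    (hB01 : ∀ t ∈ Finset.Icc 1 T, ∀ ω, B t ω = 0 ∨ B t ω = 1)
    (hBmeas : ∀ t ∈ Finset.Icc 1 T, Measurable[𝒢 t] (B t))
    (hBindep : ∀ t ∈ Finset.Icc 1 T,
      Indep (MeasurableSpace.comap (B t) inferInstance) (𝒢 (t - 1)) P)
    (hBp : ∀ t ∈ Finset.Icc 1 T, (P {ω | B t ω = 1}).toReal = p)
    (ε : ℝ) (hε0 : 0 < ε) (hε1 : ε < 1) :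
    P {ω | Real.log (1 / ε) + 2 < ∑ t ∈ Finset.Icc 1 T, f t ω * B t ω}
      ≤ ENNReal.ofReal ε := by
  set c : ℝ := Real.exp 1 - 1 with hc_def
  have hc0 : 0 ≤ c := by
    have := Real.add_one_le_exp (1 : ℝ)
    simp only [hc_def]; linarith
  set g : ℕ → Ω → ℝ := fun t ω => Real.exp (f t ω * B t ω - c * p * f t ω) with hg_def
  -- basic pointwise facts
  have hf_nonneg : ∀ t ∈ Finset.Icc 1 T, ∀ ω, 0 ≤ f t ω := by
    intro t ht ω; rcases hf01 t ht ω with h | h <;> simp [h]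
  have hf_le1 : ∀ t ∈ Finset.Icc 1 T, ∀ ω, f t ω ≤ 1 := by
    intro t ht ω; rcases hf01 t ht ω with h | h <;> simp [h]
  have hB_nonneg : ∀ t ∈ Finset.Icc 1 T, ∀ ω, 0 ≤ B t ω := by
    intro t ht ω; rcases hB01 t ht ω with h | h <;> simp [h]
  have hB_le1 : ∀ t ∈ Finset.Icc 1 T, ∀ ω, B t ω ≤ 1 := by
    intro t ht ω; rcases hB01 t ht ω with h | h <;> simp [h]
  have hfB_le1 : ∀ t ∈ Finset.Icc 1 T, ∀ ω, f t ω * B t ω ≤ 1 := by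
    intro t ht ω
    calc f t ω * B t ω ≤ 1 * 1 :=
          mul_le_mul (hf_le1 t ht ω) (hB_le1 t ht ω) (hB_nonneg t ht ω) zero_le_one
      _ = 1 := one_mul 1
  have hfB_nonneg : ∀ t ∈ Finset.Icc 1 T, ∀ ω, 0 ≤ f t ω * B t ω := fun t ht ω =>
    mul_nonneg (hf_nonneg t ht ω) (hB_nonneg t ht ω)
  -- measurability at the ambient σ-algebra
  have hfm : ∀ t ∈ Finset.Icc 1 T, Measurable (f t) := fun t ht =>
    (hfmeas t ht).mono (𝒢.le _) le_rfl
  have hBm : ∀ t ∈ Finset.Icc 1 T, Measurable (B t) := fun t ht =>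
    (hBmeas t ht).mono (𝒢.le _) le_rfl
  have hgm : ∀ t ∈ Finset.Icc 1 T, Measurable (g t) := by
    intro t ht
    exact (((hfm t ht).mul (hBm t ht)).sub ((hfm t ht).const_mul (c * p))).exp
  have hg_nonneg : ∀ t (ω : Ω), 0 ≤ g t ω := fun t ω => (Real.exp_pos _).le
  have hg_le : ∀ t ∈ Finset.Icc 1 T, ∀ ω, g t ω ≤ Real.exp 1 := by
    intro t ht ω
    apply Real.exp_le_exp.mpr
    have h1 : 0 ≤ c * p * f t ω :=
      mul_nonneg (mul_nonneg hc0 hp0.le) (hf_nonneg t ht ω)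
    have := hfB_le1 t ht ω
    linarith
  -- the supermartingale product and its bounds
  have hGmeas : ∀ n, n ≤ T → Measurable (fun ω => ∏ t ∈ Finset.Icc 1 n, g t ω) := by
    intro n hn
    exact Finset.measurable_prod _ fun t ht =>
      hgm t (Finset.Icc_subset_Icc_right hn ht)
  have hG_nonneg : ∀ n (ω : Ω), 0 ≤ ∏ t ∈ Finset.Icc 1 n, g t ω := fun n ω =>
    Finset.prod_nonneg fun t _ => hg_nonneg t ω
  have hG_le : ∀ n, n ≤ T → ∀ ω, (∏ t ∈ Finset.Icc 1 n, g t ω) ≤ Real.exp 1 ^ n := by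
    intro n hn ω
    calc (∏ t ∈ Finset.Icc 1 n, g t ω) ≤ ∏ t ∈ Finset.Icc 1 n, Real.exp 1 :=
          Finset.prod_le_prod (fun t _ => hg_nonneg t ω)
            (fun t ht => hg_le t (Finset.Icc_subset_Icc_right hn ht) ω)
      _ = Real.exp 1 ^ n := by rw [Finset.prod_const, Nat.card_Icc]; norm_num
  have hGint : ∀ n, n ≤ T → Integrable (fun ω => ∏ t ∈ Finset.Icc 1 n, g t ω) P := by
    intro n hn
    refine integrable_of_bdd' P (hGmeas n hn) (Real.exp 1 ^ n) fun ω => ?_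
    rw [abs_of_nonneg (hG_nonneg n ω)]
    exact hG_le n hn ω
  -- key supermartingale estimate
  have key : ∀ n, n ≤ T → ∫ ω, ∏ t ∈ Finset.Icc 1 n, g t ω ∂P ≤ 1 := by
    intro n
    induction n with
    | zero => intro _; simp
    | succ n ih =>
      intro hn1
      have hn : n ≤ T := Nat.le_of_succ_le hn1
      have ht1 : n + 1 ∈ Finset.Icc 1 T := by
        simp only [Finset.mem_Icc]; omega
      set G : Ω → ℝ := fun ω => ∏ t ∈ Finset.Icc 1 n, g t ω with hG_def
      have hsplit : ∀ ω, (∏ t ∈ Finset.Icc 1 (n + 1), g t ω) = G ω * g (n + 1) ω :=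
        fun ω => Finset.prod_Icc_succ_top (by omega) _
      have hgdec : ∀ ω, g (n + 1) ω
          = (1 - f (n + 1) ω) + f (n + 1) ω * (Real.exp (-(c * p)) * Real.exp (B (n + 1) ω)) := by
        intro ω
        rcases hf01 (n + 1) ht1 ω with h | h
        · simp [hg_def, h]
        · simp only [hg_def, h, one_mul, mul_one, ← Real.exp_add, sub_self, zero_add]
          congr 1; ring
      -- measurability / integrability pieces
      have hfnm : Measurable (f (n + 1)) := hfm _ ht1
      have hBnm : Measurable (B (n + 1)) := hBm _ ht1
      have hGm : Measurable G := hGmeas n hn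
      have hGf_int : Integrable (fun ω => G ω * f (n + 1) ω) P := by
        refine integrable_of_bdd' P (hGm.mul hfnm) (Real.exp 1 ^ n) fun ω => ?_
        rw [abs_of_nonneg (mul_nonneg (hG_nonneg n ω) (hf_nonneg _ ht1 ω))]
        calc G ω * f (n + 1) ω ≤ G ω * 1 :=
              mul_le_mul_of_nonneg_left (hf_le1 _ ht1 ω) (hG_nonneg n ω)
          _ = G ω := mul_one _
          _ ≤ _ := hG_le n hn ω
      have hGonef_int : Integrable (fun ω => G ω * (1 - f (n + 1) ω)) P := by
        refine integrable_of_bdd' P (hGm.mul (measurable_const.sub hfnm)) (Real.exp 1 ^ n)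
          fun ω => ?_
        have h1 : 0 ≤ 1 - f (n + 1) ω := by linarith [hf_le1 _ ht1 ω]
        rw [abs_of_nonneg (mul_nonneg (hG_nonneg n ω) h1)]
        calc G ω * (1 - f (n + 1) ω) ≤ G ω * 1 :=
              mul_le_mul_of_nonneg_left (by linarith [hf_nonneg _ ht1 ω]) (hG_nonneg n ω)
          _ = G ω := mul_one _
          _ ≤ _ := hG_le n hn ω
      have hexpB_int : Integrable (fun ω => Real.exp (B (n + 1) ω)) P := by
        refine integrable_of_bdd' P hBnm.exp (Real.exp 1) fun ω => ?_
        rw [abs_of_nonneg (Real.exp_pos _).le]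
        exact Real.exp_le_exp.mpr (hB_le1 _ ht1 ω)
      have hGfexpB_int : Integrable (fun ω => G ω * f (n + 1) ω * Real.exp (B (n + 1) ω)) P := by
        refine integrable_of_bdd' P ((hGm.mul hfnm).mul hBnm.exp)
          (Real.exp 1 ^ n * Real.exp 1) fun ω => ?_
        rw [abs_mul]
        apply mul_le_mul
        · rw [abs_of_nonneg (mul_nonneg (hG_nonneg n ω) (hf_nonneg _ ht1 ω))]
          calc G ω * f (n + 1) ω ≤ G ω * 1 :=
                mul_le_mul_of_nonneg_left (hf_le1 _ ht1 ω) (hG_nonneg n ω)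
            _ = G ω := mul_one _
            _ ≤ _ := hG_le n hn ω
        · rw [abs_of_nonneg (Real.exp_pos _).le]
          exact Real.exp_le_exp.mpr (hB_le1 _ ht1 ω)
        · exact abs_nonneg _
        · positivity
      -- independence
      have hGf_meas𝒢 : Measurable[𝒢 n] (fun ω => G ω * f (n + 1) ω) := by
        have hGm𝒢 : Measurable[𝒢 n] G := by
          apply Finset.measurable_prod
          intro t ht
          have ht' : t ∈ Finset.Icc 1 T := Finset.Icc_subset_Icc_right hn ht
          have htn : t ≤ n := (Finset.mem_Icc.mp ht).2
          have hftm : Measurable[𝒢 n] (f t) :=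
            (hfmeas t ht').mono (𝒢.mono (by omega)) le_rfl
          have hBtm : Measurable[𝒢 n] (B t) :=
            (hBmeas t ht').mono (𝒢.mono htn) le_rfl
          exact ((hftm.mul hBtm).sub (hftm.const_mul (c * p))).exp
        have hfn𝒢 : Measurable[𝒢 n] (f (n + 1)) := by
          have := hfmeas (n + 1) ht1
          simpa using this
        exact hGm𝒢.mul hfn𝒢
      have hindep : IndepFun (fun ω => G ω * f (n + 1) ω)
          (fun ω => Real.exp (B (n + 1) ω)) P := by
        rw [IndepFun_iff_Indep]
        have h1 : Indep (𝒢 n) (MeasurableSpace.comap (B (n + 1)) inferInstance) P := by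
          have := (hBindep (n + 1) ht1).symm
          simpa using this
        refine indep_of_indep_of_le_right (indep_of_indep_of_le_left h1 ?_) ?_
        · exact hGf_meas𝒢.comap_le
        · rw [show (fun ω => Real.exp (B (n + 1) ω)) = Real.exp ∘ B (n + 1) from rfl,
            ← MeasurableSpace.comap_comp]
          exact MeasurableSpace.comap_mono Real.measurable_exp.comap_le
      -- expectation of exp(B)
      have hBset : MeasurableSet {ω | B (n + 1) ω = 1} := hBnm (measurableSet_singleton 1)
      have hB_ind : ∀ ω, B (n + 1) ω
          = Set.indicator {ω | B (n + 1) ω = 1} (fun _ => (1 : ℝ)) ω := by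
        intro ω
        rcases hB01 (n + 1) ht1 ω with h | h <;>
          simp [Set.indicator_apply, h]
      have hBint : ∫ ω, B (n + 1) ω ∂P = p := by
        rw [show (fun ω => B (n + 1) ω) = Set.indicator {ω | B (n + 1) ω = 1} (fun _ => (1 : ℝ))
          from funext hB_ind]
        rw [integral_indicator_const (1 : ℝ) hBset, smul_eq_mul, mul_one]
        exact hBp (n + 1) ht1
      have hB_int : Integrable (B (n + 1)) P := by
        refine integrable_of_bdd' P hBnm 1 fun ω => ?_
        rw [abs_of_nonneg (hB_nonneg _ ht1 ω)]; exact hB_le1 _ ht1 ω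
      have hexpB_val : ∫ ω, Real.exp (B (n + 1) ω) ∂P = 1 + c * p := by
        have hpt : ∀ ω, Real.exp (B (n + 1) ω) = 1 + c * B (n + 1) ω := by
          intro ω
          rcases hB01 (n + 1) ht1 ω with h | h
          · simp [h]
          · simp [h, hc_def]
        calc ∫ ω, Real.exp (B (n + 1) ω) ∂P = ∫ ω, (1 + c * B (n + 1) ω) ∂P := by
              exact integral_congr_ae (ae_of_all _ hpt)
          _ = 1 + c * p := by
              rw [integral_add (integrable_const 1) (hB_int.const_mul c),
                integral_const, integral_const_mul, hBint]
              simp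
      -- the one-step computation
      have hstep : ∫ ω, ∏ t ∈ Finset.Icc 1 (n + 1), g t ω ∂P
          ≤ ∫ ω, G ω ∂P := by
        have heq : ∀ ω, (∏ t ∈ Finset.Icc 1 (n + 1), g t ω)
            = G ω * (1 - f (n + 1) ω)
              + Real.exp (-(c * p)) * (G ω * f (n + 1) ω * Real.exp (B (n + 1) ω)) := by
          intro ω
          rw [hsplit ω, hgdec ω]
          ring
        rw [show (fun ω => ∏ t ∈ Finset.Icc 1 (n + 1), g t ω)
            = fun ω => G ω * (1 - f (n + 1) ω)
              + Real.exp (-(c * p)) * (G ω * f (n + 1) ω * Real.exp (B (n + 1) ω))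
            from funext heq]
        rw [integral_add hGonef_int (hGfexpB_int.const_mul _), integral_const_mul]
        have hmul : ∫ ω, G ω * f (n + 1) ω * Real.exp (B (n + 1) ω) ∂P
            = (∫ ω, G ω * f (n + 1) ω ∂P) * ∫ ω, Real.exp (B (n + 1) ω) ∂P := by
          have := hindep.integral_mul_eq_mul_integral (hGm.mul hfnm).aestronglyMeasurable
            hBnm.exp.aestronglyMeasurable
          simpa [Pi.mul_apply] using this
        rw [hmul, hexpB_val]
        have hGf_nonneg : 0 ≤ ∫ ω, G ω * f (n + 1) ω ∂P :=
          integral_nonneg fun ω => mul_nonneg (hG_nonneg n ω) (hf_nonneg _ ht1 ω)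
        have hsub : ∫ ω, G ω * (1 - f (n + 1) ω) ∂P
            = ∫ ω, G ω ∂P - ∫ ω, G ω * f (n + 1) ω ∂P := by
          rw [← integral_sub (hGint n hn) hGf_int]
          congr 1; funext ω; ring
        rw [hsub]
        have hfac : Real.exp (-(c * p)) * (1 + c * p) ≤ 1 := by
          have h1 : 1 + c * p ≤ Real.exp (c * p) := by
            have := Real.add_one_le_exp (c * p); linarith
          have h2 : Real.exp (-(c * p)) * Real.exp (c * p) = 1 := by
            rw [← Real.exp_add]; simp
          nlinarith [Real.exp_pos (-(c * p))]
        nlinarith [hGf_nonneg, Real.exp_pos (-(c * p))]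
      exact hstep.trans (ih hn)
  -- from the supermartingale bound to the MGF bound
  set S : Ω → ℝ := fun ω => ∑ t ∈ Finset.Icc 1 T, f t ω * B t ω with hS_def
  have hSmeas : Measurable S :=
    Finset.measurable_sum _ fun t ht => (hfm t ht).mul (hBm t ht)
  have hS_le : ∀ ω, S ω ≤ (T : ℝ) := by
    intro ω
    calc S ω ≤ ∑ t ∈ Finset.Icc 1 T, (1 : ℝ) :=
          Finset.sum_le_sum fun t ht => hfB_le1 t ht ω
      _ = (T : ℝ) := by rw [Finset.sum_const, Nat.card_Icc]; simp
  have hS_nonneg : ∀ ω, 0 ≤ S ω := fun ω =>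
    Finset.sum_nonneg fun t ht => hfB_nonneg t ht ω
  have hexpS_int : Integrable (fun ω => Real.exp (S ω)) P := by
    refine integrable_of_bdd' P hSmeas.exp (Real.exp T) fun ω => ?_
    rw [abs_of_nonneg (Real.exp_pos _).le]
    exact Real.exp_le_exp.mpr (hS_le ω)
  have hfactor : ∀ ω, Real.exp (S ω)
      = (∏ t ∈ Finset.Icc 1 T, g t ω) * Real.exp (c * p * ∑ t ∈ Finset.Icc 1 T, f t ω) := by
    intro ω
    rw [show (∏ t ∈ Finset.Icc 1 T, g t ω)
        = Real.exp (∑ t ∈ Finset.Icc 1 T, (f t ω * B t ω - c * p * f t ω))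
      from (Real.exp_sum _ _).symm, ← Real.exp_add]
    congr 1
    rw [Finset.sum_sub_distrib, ← Finset.mul_sum]
    simp [hS_def]
  have hmgf : ∫ ω, Real.exp (S ω) ∂P ≤ Real.exp c := by
    have hae : ∀ᵐ ω ∂P, Real.exp (S ω) ≤ (∏ t ∈ Finset.Icc 1 T, g t ω) * Real.exp c := by
      filter_upwards [hfbudget] with ω hω
      rw [hfactor ω]
      apply mul_le_mul_of_nonneg_left _ (hG_nonneg T ω)
      apply Real.exp_le_exp.mpr
      have h1 : p * ∑ t ∈ Finset.Icc 1 T, f t ω ≤ p * F := by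
        exact mul_le_mul_of_nonneg_left hω hp0.le
      have h2 : c * (p * ∑ t ∈ Finset.Icc 1 T, f t ω) ≤ c * 1 := by
        apply mul_le_mul_of_nonneg_left _ hc0
        calc p * ∑ t ∈ Finset.Icc 1 T, f t ω ≤ p * F := h1
          _ = F * p := mul_comm _ _
          _ ≤ 1 := hFp
      calc c * p * ∑ t ∈ Finset.Icc 1 T, f t ω
          = c * (p * ∑ t ∈ Finset.Icc 1 T, f t ω) := by ring
        _ ≤ c * 1 := h2
        _ = c := mul_one c
    calc ∫ ω, Real.exp (S ω) ∂P
        ≤ ∫ ω, (∏ t ∈ Finset.Icc 1 T, g t ω) * Real.exp c ∂P :=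
          integral_mono_ae hexpS_int ((hGint T le_rfl).mul_const _) hae
      _ = (∫ ω, ∏ t ∈ Finset.Icc 1 T, g t ω ∂P) * Real.exp c := integral_mul_const _ _
      _ ≤ 1 * Real.exp c := by
          apply mul_le_mul_of_nonneg_right (key T le_rfl) (Real.exp_pos _).le
      _ = Real.exp c := one_mul _
  -- Markov / Chernoff
  set a : ℝ := Real.log (1 / ε) + 2 with ha_def
  have hsub : {ω | a < S ω} ⊆ {ω | Real.exp a ≤ Real.exp (S ω)} := fun ω h =>
    Real.exp_le_exp.mpr (le_of_lt h)
  have hmarkov := mul_meas_ge_le_integral_of_nonneg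
    (ae_of_all P fun ω => (Real.exp_pos (S ω)).le) hexpS_int (Real.exp a)
  have hmono : (P {ω | a < S ω}).toReal ≤ (P {x | Real.exp a ≤ Real.exp (S x)}).toReal :=
    ENNReal.toReal_mono (measure_ne_top P _) (measure_mono hsub)
  have hfinal : (P {ω | a < S ω}).toReal ≤ ε := by
    have hexpa_pos : 0 < Real.exp a := Real.exp_pos a
    have h1 : (P {x | Real.exp a ≤ Real.exp (S x)}).toReal
        ≤ Real.exp c / Real.exp a := by
      rw [le_div_iff₀ hexpa_pos, mul_comm]
      exact hmarkov.trans hmgf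
    have h2 : Real.exp c / Real.exp a = Real.exp (c - a) := (Real.exp_sub _ _).symm
    have h3 : Real.exp (c - a) = Real.exp (Real.exp 1 - 3) * ε := by
      have : c - a = (Real.exp 1 - 3) + Real.log ε := by
        rw [ha_def, hc_def, Real.log_div one_ne_zero (ne_of_gt hε0), Real.log_one]
        ring
      rw [this, Real.exp_add, Real.exp_log hε0]
    have h4 : Real.exp (Real.exp 1 - 3) ≤ 1 := by
      apply Real.exp_le_one_iff.mpr
      have := Real.exp_one_lt_d9
      linarith
    calc (P {ω | a < S ω}).toReal ≤ Real.exp c / Real.exp a := hmono.trans h1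
      _ = Real.exp (Real.exp 1 - 3) * ε := by rw [h2, h3]
      _ ≤ 1 * ε := mul_le_mul_of_nonneg_right h4 hε0.le
      _ = ε := one_mul ε
  have : P {ω | a < S ω} ≤ ENNReal.ofReal ε := by
    rw [← ENNReal.ofReal_toReal (measure_ne_top P {ω | a < S ω})]
    exact ENNReal.ofReal_le_ofReal hfinal
  exact this
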